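/- arXiv:2305.07271 — 11 statements merged into one kernel-verified Lean document; each statement's English description precedes it below -/
import Mathlib

section
/- Let Σ be an alphabet, let A be a language over Σ recognized by a deterministic finite automaton with n_A states, and for each i with 1 ≤ i ≤ k let B_i be a language over Σ recognized by a nondeterministic finite automaton with n_i states. Then the concatenation B_1 · B_2 ⋯ B_k is contained in A if and only if the concatenation of truncations (B_1)_{|n_A·n_1} · (B_2)_{|n_A·n_2} ⋯ (B_k)_{|n_A·n_k} is contained in A. -/
/-- The `m`-truncation of a language: the words of `L` of length at most `m`. -/
def Language.trunc {α : Type} (L : Language α) (m : ℕ) : Language α :=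
  {w : List α | w ∈ L ∧ w.length ≤ m}

/-!
Call `L` a cover of `L'` for `M` if from every state each word of `L'` drives `M` to the same
state as some word of `L`. Covers multiply: replace the factors of a word one at a time from left
to right, each from the state reached so far. So if each `C i` covers `B i`, then `C 1 ⋯ C k`
covers `B 1 ⋯ B k`, and inclusion in `M.accepts` transfers from the former to the latter.

`B i` covers its truncation trivially. Conversely, an accepting run of the NFA on `w`, read in
parallel with `M` from a state `s`, is a run of a DFA with `n_A n_i + 1` states (the extra one
records a broken run), so the pumping lemma shortens `w` to a word of length at most `n_A n_i`
that is still accepted and drives `M` from `s` to the same state.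
-/

namespace DFA

variable {α σ : Type*} (M : DFA α σ)

theorem exists_length_lt_card_evalFrom_eq [Fintype σ] (s : σ) (x : List α) :
    ∃ y : List α, y.length < Fintype.card σ ∧ M.evalFrom s y = M.evalFrom s x := by
  induction hx : x.length using Nat.strong_induction_on generalizing x with
  | _ n ih =>
  by_cases hlen : x.length < Fintype.card σ
  · exact ⟨x, hlen, rfl⟩
  obtain ⟨q, a, b, c, rfl, -, hb, ha, hbq, hc⟩ := M.evalFrom_split (not_lt.1 hlen) rfl
  have hshorter : (a ++ c).length < n := by
    have := List.length_pos_iff.2 hb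
    simp only [List.length_append] at hx ⊢
    omega
  obtain ⟨y, hy, hyac⟩ := ih _ hshorter (a ++ c) rfl
  refine ⟨y, hy, ?_⟩
  rw [hyac, evalFrom_of_append, evalFrom_of_append, evalFrom_of_append, ha, hbq]

open Classical in
/-- The letter `(a, t)` reads `a` and moves the NFA to `t`; `none` records that the run broke off. -/
noncomputable def prodRuns {σ' : Type*} (N : NFA α σ') : DFA (α × σ') (Option (σ × σ')) where
  step o x := o.bind fun pq => if x.2 ∈ N.step pq.2 x.1 then some (M.step pq.1 x.1, x.2) else none
  start := none
  accept := ∅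

variable {σ' : Type*} (N : NFA α σ')

@[simp]
theorem evalFrom_prodRuns_none (y : List (α × σ')) : (M.prodRuns N).evalFrom none y = none := by
  induction y with
  | nil => rfl
  | cons _ _ ih => exact ih

theorem exists_evalFrom_prodRuns_eq_some {p : σ} {q t : σ'} {w : List α}
    (h : t ∈ N.evalFrom {q} w) :
    ∃ y, y.map Prod.fst = w ∧
      (M.prodRuns N).evalFrom (some (p, q)) y = some (M.evalFrom p w, t) := by
  induction w generalizing p q with
  | nil => exact ⟨[], rfl, by simpa [eq_comm] using h⟩
  | cons a w ih =>
    rw [NFA.evalFrom_cons, NFA.stepSet_singleton, NFA.mem_evalFrom_iff_exists] at h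
    obtain ⟨q₁, hq₁, ht⟩ := h
    obtain ⟨y, rfl, hy⟩ := ih (p := M.step p a) ht
    have hstep : (M.prodRuns N).step (some (p, q)) (a, q₁) = some (M.step p a, q₁) := if_pos hq₁
    exact ⟨(a, q₁) :: y, rfl, by rwa [evalFrom_cons, hstep]⟩

theorem mem_evalFrom_of_evalFrom_prodRuns_eq_some {p p' : σ} {q t : σ'} {y : List (α × σ')}
    (h : (M.prodRuns N).evalFrom (some (p, q)) y = some (p', t)) :
    p' = M.evalFrom p (y.map Prod.fst) ∧ t ∈ N.evalFrom {q} (y.map Prod.fst) := by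
  induction y generalizing p q with
  | nil => simp_all [eq_comm]
  | cons x y ih =>
    obtain ⟨a, q₁⟩ := x
    by_cases hq₁ : q₁ ∈ N.step q a
    · have hstep : (M.prodRuns N).step (some (p, q)) (a, q₁) = some (M.step p a, q₁) :=
        if_pos hq₁
      rw [evalFrom_cons, hstep] at h
      obtain ⟨rfl, ht⟩ := ih h
      refine ⟨rfl, ?_⟩
      rw [List.map_cons, NFA.evalFrom_cons, NFA.stepSet_singleton, NFA.mem_evalFrom_iff_exists]
      exact ⟨q₁, hq₁, ht⟩
    · have hstep : (M.prodRuns N).step (some (p, q)) (a, q₁) = none := if_neg hq₁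
      rw [evalFrom_cons, hstep, evalFrom_prodRuns_none] at h
      cases h

theorem exists_mem_accepts_length_le_evalFrom_eq [Fintype σ] [Fintype σ'] (s : σ) {w : List α}
    (hw : w ∈ N.accepts) :
    ∃ w' ∈ N.accepts, w'.length ≤ Fintype.card σ * Fintype.card σ' ∧
      M.evalFrom s w' = M.evalFrom s w := by
  obtain ⟨t, ht, hw⟩ := NFA.mem_accepts.1 hw
  obtain ⟨q, hq, hw⟩ := NFA.mem_evalFrom_iff_exists.1 hw
  obtain ⟨y, rfl, hy⟩ := M.exists_evalFrom_prodRuns_eq_some N (p := s) hw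
  obtain ⟨y', hy'len, hy'⟩ := (M.prodRuns N).exists_length_lt_card_evalFrom_eq (some (s, q)) y
  obtain ⟨hs, ht'⟩ := M.mem_evalFrom_of_evalFrom_prodRuns_eq_some N (hy'.trans hy)
  refine ⟨y'.map Prod.fst, NFA.mem_accepts.2 ⟨t, ht, NFA.mem_evalFrom_iff_exists.2 ⟨q, hq, ht'⟩⟩,
    ?_, hs.symm⟩
  simpa [Nat.lt_succ_iff] using hy'len

def Covers (L L' : Language α) : Prop :=
  ∀ s, ∀ w ∈ L', ∃ w' ∈ L, M.evalFrom s w' = M.evalFrom s w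

variable {M}

theorem Covers.of_le {L L' : Language α} (h : L' ≤ L) : M.Covers L L' :=
  fun _ w hw => ⟨w, h hw, rfl⟩

theorem Covers.mul {L₁ L₁' L₂ L₂' : Language α} (h₁ : M.Covers L₁ L₁') (h₂ : M.Covers L₂ L₂') :
    M.Covers (L₁ * L₂) (L₁' * L₂') := by
  rintro s _ ⟨u, hu, v, hv, rfl⟩
  obtain ⟨u', hu', hsu⟩ := h₁ s u hu
  obtain ⟨v', hv', hsv⟩ := h₂ (M.evalFrom s u) v hv
  refine ⟨u' ++ v', Language.append_mem_mul hu' hv', ?_⟩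
  rw [evalFrom_of_append, evalFrom_of_append, hsu, hsv]

theorem Covers.prod_ofFn {k : ℕ} {L L' : Fin k → Language α} (h : ∀ i, M.Covers (L i) (L' i)) :
    M.Covers (List.ofFn L).prod (List.ofFn L').prod := by
  induction k with
  | zero => exact Covers.of_le le_rfl
  | succ k ih =>
    simp only [List.ofFn_succ, List.prod_cons]
    exact (h 0).mul (ih fun i => h i.succ)

theorem Covers.le_accepts {L L' : Language α} (h : M.Covers L L') (hL : L ≤ M.accepts) :
    L' ≤ M.accepts := by
  intro w hw
  obtain ⟨w', hw', heq⟩ := h M.start w hw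
  have hw'acc : M.evalFrom M.start w' ∈ M.accept := hL hw'
  rwa [heq] at hw'acc

end DFA

theorem DFA.covers_trunc {α : Type} {σ σ' : Type*} [Fintype σ] [Fintype σ'] (M : DFA α σ)
    (N : NFA α σ') : M.Covers (N.accepts.trunc (Fintype.card σ * Fintype.card σ')) N.accepts :=
  fun s _ hw =>
    let ⟨w', hw', hlen, heq⟩ := M.exists_mem_accepts_length_le_evalFrom_eq N s hw
    ⟨w', ⟨hw', hlen⟩, heq⟩

/-- Let `A` be recognized by a DFA with `n_A` states and, for `1 ≤ i ≤ k`, let `B i` be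
recognized by an NFA with `n_i` states. Then `B_1 ⋯ B_k ⊆ A` iff
`(B_1)_{|n_A n_1} ⋯ (B_k)_{|n_A n_k} ⊆ A`. -/
theorem concat_subset_iff_trunc_concat_subset
    {α : Type} {σA : Type} [Fintype σA] (M : DFA α σA) (A : Language α)
    (hA : M.accepts = A) (k : ℕ) (σB : Fin k → Type) [∀ i, Fintype (σB i)]
    (N : ∀ i, NFA α (σB i)) (B : Fin k → Language α) (hB : ∀ i, (N i).accepts = B i) :
    (List.ofFn B).prod ≤ A ↔
      (List.ofFn fun i =>
        (B i).trunc (Fintype.card σA * Fintype.card (σB i))).prod ≤ A := by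
  subst hA
  obtain rfl : B = fun i => (N i).accepts := funext fun i => (hB i).symm
  exact ⟨(DFA.Covers.prod_ofFn fun _ => DFA.Covers.of_le fun _ hw => hw.1).le_accepts,
    (DFA.Covers.prod_ofFn fun i => M.covers_trunc (N i)).le_accepts⟩
end

section
/- Let Σ be an alphabet, let X be a symbol not in Σ, and let L_1, L_2 be languages over Σ (viewed as languages over the alphabet Σ ∪ {X}). Let P(L_1, L_2) be the RGP over Σ ∪ {X} with three distinct vertices x, y, z, an arc from x to y labeled L_1, and an arc from x to z labeled {X} ∪ L_2 (the language consisting of the one-letter word X together with all words of L_2). Then P(L_1, L_2) is an n-core if and only if L_1 is not contained in L_2. -/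
/-- A regular graph pattern (RGP) over alphabet `α` with vertex type `V`:
a digraph with each arc assigned a language over `α`. -/
structure RGP (α : Type) (V : Type) where
  arcs : V → V → Prop
  label : V → V → Language α

/-- `RGP.Walk Q u v L`: there is a nonempty directed walk from `u` to `v` in `Q`
whose language (the concatenation of the labels of its arcs) is `L`. -/
inductive RGP.Walk {α V : Type} (Q : RGP α V) : V → V → Language α → Prop
  | single {x y : V} : Q.arcs x y → RGP.Walk Q x y (Q.label x y)
  | cons {x y z : V} {L : Language α} : Q.arcs x y → RGP.Walk Q y z L →
      RGP.Walk Q x z (Q.label x y * L)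

/-- `f` is a navigational homomorphism from `P` to `Q`. -/
def IsNHom {α VP VQ : Type} (P : RGP α VP) (Q : RGP α VQ) (f : VP → VQ) : Prop :=
  ∀ x y, P.arcs x y → ∃ L, Q.Walk (f x) (f y) L ∧ L ≤ P.label x y

/-- `P →n Q`: there exists a navigational homomorphism from `P` to `Q`. -/
def NHom {α VP VQ : Type} (P : RGP α VP) (Q : RGP α VQ) : Prop :=
  ∃ f, IsNHom P Q f

/-- A sub-RGP of `P`: a subset of vertices and a subset of the arcs between them,
with the same labels. -/
structure SubRGP {α V : Type} (P : RGP α V) where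
  verts : Set V
  arcs : V → V → Prop
  arcs_sub : ∀ x y, arcs x y → P.arcs x y
  mem_left : ∀ x y, arcs x y → x ∈ verts
  mem_right : ∀ x y, arcs x y → y ∈ verts

/-- The RGP corresponding to a sub-RGP. -/
def SubRGP.toRGP {α V : Type} {P : RGP α V} (C : SubRGP P) : RGP α C.verts where
  arcs x y := C.arcs x.1 y.1
  label x y := P.label x.1 y.1

/-- A sub-RGP is proper if it omits a vertex or an arc. -/
def SubRGP.Proper {α V : Type} {P : RGP α V} (C : SubRGP P) : Prop :=
  C.verts ≠ Set.univ ∨ C.arcs ≠ P.arcs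

/-- An RGP is an n-core if it admits no n-homomorphism to a proper sub-RGP of itself. -/
def IsNCore {α V : Type} (P : RGP α V) : Prop :=
  ∀ C : SubRGP P, C.Proper → ¬ NHom P C.toRGP

/-- The one-word language `{X}` over `Σ ∪ {X}`. -/
def LX (σ : Type) : Language (σ ⊕ Unit) := {w : List (σ ⊕ Unit) | w = [Sum.inr ()]}

/-- The RGP `P(L₁, L₂)` over the alphabet `Σ ∪ {X}` (modeled by `σ ⊕ Unit`, where
`X = Sum.inr ()` is the extra symbol not in `Σ`), with three distinct vertices
`x = 0`, `y = 1`, `z = 2`, an arc from `x` to `y` labeled `L₁`, and an arc from `x`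
to `z` labeled `{X} ∪ L₂`. -/
def coreGadget {σ : Type} (L₁ L₂ : Language σ) : RGP (σ ⊕ Unit) (Fin 3) where
  arcs i j := i = 0 ∧ (j = 1 ∨ j = 2)
  label _ j :=
    if j = 1 then Language.map (Sum.inl : σ → σ ⊕ Unit) L₁
    else if j = 2 then LX σ + Language.map (Sum.inl : σ → σ ⊕ Unit) L₂
    else 0

section Aux

variable {σ : Type} {L₁ L₂ : Language σ}

lemma lX_not_mem_map (L : Language σ) :
    [Sum.inr ()] ∉ Language.map (Sum.inl : σ → σ ⊕ Unit) L := by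
  rintro ⟨u, hu, hmap⟩
  match u, hmap with
  | [a], h => simp at h

lemma map_le_map_iff :
    Language.map (Sum.inl : σ → σ ⊕ Unit) L₁ ≤ Language.map (Sum.inl : σ → σ ⊕ Unit) L₂ ↔
      L₁ ≤ L₂ := by
  constructor
  · intro h w hw
    obtain ⟨u, hu, he⟩ := h ⟨w, hw, rfl⟩
    rwa [← List.map_injective_iff.2 Sum.inl_injective he]
  · rintro h w ⟨u, hu, rfl⟩
    exact ⟨u, h hu, rfl⟩

lemma map_le_M_iff :
    Language.map (Sum.inl : σ → σ ⊕ Unit) L₁ ≤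
      LX σ + Language.map (Sum.inl : σ → σ ⊕ Unit) L₂ ↔ L₁ ≤ L₂ := by
  constructor
  · intro h
    rw [← map_le_map_iff (L₁ := L₁) (L₂ := L₂)]
    rintro w ⟨u, hu, rfl⟩
    rcases (Language.mem_add _ _ _).1 (h ⟨u, hu, rfl⟩) with hx | hx
    · exfalso
      rw [LX] at hx
      match u, hx with
      | [a], h => simp [List.map] at h; cases h
    · exact hx
  · intro h w hw
    exact (Language.mem_add _ _ _).2 (Or.inr ((map_le_map_iff.2 h) hw))

lemma M_not_le_map :
    ¬ (LX σ + Language.map (Sum.inl : σ → σ ⊕ Unit) L₂ ≤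
      Language.map (Sum.inl : σ → σ ⊕ Unit) L₁) := by
  intro h
  exact lX_not_mem_map L₁ (h ((Language.mem_add _ _ _).2 (Or.inl rfl)))

lemma walk_struct {C : SubRGP (coreGadget L₁ L₂)} {u v : C.verts} {L : Language (σ ⊕ Unit)}
    (h : C.toRGP.Walk u v L) :
    C.arcs u.1 v.1 ∧ L = (coreGadget L₁ L₂).label u.1 v.1 := by
  cases h with
  | single h => exact ⟨h, rfl⟩
  | @cons x y z L h hw =>
    exfalso
    have hy1 : y.1 = 1 ∨ y.1 = 2 := (C.arcs_sub _ _ h).2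
    have hy0 : y.1 = 0 := by
      cases hw with
      | single h' => exact (C.arcs_sub _ _ h').1
      | cons h' _ => exact (C.arcs_sub _ _ h').1
    rcases hy1 with h1 | h1 <;> rw [h1] at hy0 <;> exact absurd hy0 (by decide)

end Aux

def subC {σ : Type} (L₁ L₂ : Language σ) : SubRGP (coreGadget L₁ L₂) where
  verts := {0, 1}
  arcs i j := i = 0 ∧ j = 1
  arcs_sub x y h := ⟨h.1, Or.inl h.2⟩
  mem_left x y h := by simp [h.1]
  mem_right x y h := by simp [h.2]

/-- `P(L₁, L₂)` is an n-core iff `L₁ ⊄ L₂`. -/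
theorem coreGadget_isNCore_iff {σ : Type} (L₁ L₂ : Language σ) :
    IsNCore (coreGadget L₁ L₂) ↔ ¬ L₁ ≤ L₂ := by
  constructor
  · intro hcore hle
    apply hcore (subC L₁ L₂)
    · left
      intro hv
      have : (2 : Fin 3) ∈ (subC L₁ L₂).verts := by rw [hv]; trivial
      simp [subC] at this
    · have h0 : (0 : Fin 3) ∈ (subC L₁ L₂).verts := by simp [subC]
      have h1 : (1 : Fin 3) ∈ (subC L₁ L₂).verts := by simp [subC]
      refine ⟨fun i => if i = 0 then ⟨0, h0⟩ else ⟨1, h1⟩, ?_⟩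
      rintro x y ⟨rfl, hy⟩
      have harc : (subC L₁ L₂).toRGP.arcs ⟨0, h0⟩ ⟨1, h1⟩ := ⟨rfl, rfl⟩
      have hlab : (coreGadget L₁ L₂).label (0 : Fin 3) 1 =
          Language.map (Sum.inl : σ → σ ⊕ Unit) L₁ := by simp [coreGadget]
      have hlab2 : (coreGadget L₁ L₂).label (0 : Fin 3) 2 =
          LX σ + Language.map (Sum.inl : σ → σ ⊕ Unit) L₂ := by simp [coreGadget]
      have hwalklab : (subC L₁ L₂).toRGP.label ⟨0, h0⟩ ⟨1, h1⟩ =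
          Language.map (Sum.inl : σ → σ ⊕ Unit) L₁ := hlab
      rcases hy with rfl | rfl
      · refine ⟨_, RGP.Walk.single harc, ?_⟩
        show (subC L₁ L₂).toRGP.label ⟨0, h0⟩ ⟨1, h1⟩ ≤ (coreGadget L₁ L₂).label 0 1
        rw [hwalklab]
        exact le_of_eq hlab.symm
      · refine ⟨_, RGP.Walk.single harc, ?_⟩
        show (subC L₁ L₂).toRGP.label ⟨0, h0⟩ ⟨1, h1⟩ ≤ (coreGadget L₁ L₂).label 0 2
        rw [hwalklab, hlab2]
        exact map_le_M_iff.2 hle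
  · rintro hnle C hproper ⟨f, hf⟩
    have lab1 : (coreGadget L₁ L₂).label (0 : Fin 3) 1 =
        Language.map (Sum.inl : σ → σ ⊕ Unit) L₁ := by simp [coreGadget]
    have lab2 : (coreGadget L₁ L₂).label (0 : Fin 3) 2 =
        LX σ + Language.map (Sum.inl : σ → σ ⊕ Unit) L₂ := by simp [coreGadget]
    obtain ⟨La, hwa, hla⟩ := hf 0 1 ⟨rfl, Or.inl rfl⟩
    obtain ⟨Lb, hwb, hlb⟩ := hf 0 2 ⟨rfl, Or.inr rfl⟩
    obtain ⟨harca, hLa⟩ := walk_struct hwa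
    obtain ⟨harcb, hLb⟩ := walk_struct hwb
    have hf0 : (f 0).1 = 0 := (C.arcs_sub _ _ harca).1
    rw [lab1] at hla
    rw [lab2] at hlb
    rw [hLa, hf0] at hla
    rw [hLb, hf0] at hlb
    have hf1 : (f 1).1 = 1 := by
      rcases (C.arcs_sub _ _ harca).2 with h | h
      · exact h
      · rw [h, lab2] at hla
        exact absurd hla M_not_le_map
    have hf2 : (f 2).1 = 2 := by
      rcases (C.arcs_sub _ _ harcb).2 with h | h
      · rw [h, lab1] at hlb
        exact absurd (map_le_M_iff.1 hlb) hnle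
      · exact h
    rw [hf0, hf1] at harca
    rw [hf0, hf2] at harcb
    rcases hproper with hv | ha
    · apply hv
      ext i
      simp only [Set.mem_univ, iff_true]
      fin_cases i
      · exact C.mem_left _ _ harca
      · exact C.mem_right _ _ harca
      · exact C.mem_right _ _ harcb
    · apply ha
      funext i j
      apply propext
      constructor
      · exact C.arcs_sub i j
      · rintro ⟨rfl, hj⟩
        rcases hj with rfl | rfl
        · exact harca
        · exact harcb
end

section
/- Let Σ be an alphabet, let Q be an RGP over Σ with vertex set V, and let A be a language over Σ recognized by a deterministic finite automaton with n states. If there exist vertices u, v of Q and a directed walk W from u to v in Q whose language is contained in A, then there exists such a directed walk from u to v (with language contained in A) of length at most 2^n · |V|. -/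
/-- `RGP.WalkN Q u v m L`: there is a directed walk of length `m ≥ 1` from `u` to `v`
in `Q` whose language is `L`. -/
inductive RGP.WalkN {α V : Type} (Q : RGP α V) : V → V → ℕ → Language α → Prop
  | single {x y : V} : Q.arcs x y → RGP.WalkN Q x y 1 (Q.label x y)
  | cons {x y z : V} {m : ℕ} {L : Language α} : Q.arcs x y → RGP.WalkN Q y z m L →
      RGP.WalkN Q x z (m + 1) (Q.label x y * L)

/-! ### Auxiliary: walks as lists of vertices -/

/-- `cArcs Q x l`: starting at `x`, the successive vertices in `l` are joined by arcs. -/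
def cArcs {α V : Type} (Q : RGP α V) : V → List V → Prop
  | _, [] => True
  | x, y :: l => Q.arcs x y ∧ cArcs Q y l

/-- The language of the walk starting at `x` with successive vertices `l`. -/
def cLang {α V : Type} (Q : RGP α V) : V → List V → Language α
  | _, [] => 1
  | x, y :: l => Q.label x y * cLang Q y l

lemma getLastD_append' {V : Type} (a b : List V) (d : V) :
    (a ++ b).getLastD d = b.getLastD (a.getLastD d) := by
  induction a generalizing d with
  | nil => rfl
  | cons y l ih => simp only [List.cons_append, List.getLastD_cons, ih]

lemma cArcs_append {α V : Type} (Q : RGP α V) (u : V) (a b : List V) :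
    cArcs Q u (a ++ b) ↔ cArcs Q u a ∧ cArcs Q (a.getLastD u) b := by
  induction a generalizing u with
  | nil => simp [cArcs]
  | cons y l ih =>
      rw [List.cons_append]
      show (Q.arcs u y ∧ cArcs Q y (l ++ b)) ↔ _
      rw [ih, List.getLastD_cons]
      exact and_assoc.symm

lemma cLang_append {α V : Type} (Q : RGP α V) (u : V) (a b : List V) :
    cLang Q u (a ++ b) = cLang Q u a * cLang Q (a.getLastD u) b := by
  induction a generalizing u with
  | nil => simp [cLang]
  | cons y l ih =>
      rw [List.cons_append]
      show Q.label u y * cLang Q y (l ++ b) = _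
      rw [ih, List.getLastD_cons]
      exact (mul_assoc _ _ _).symm

lemma walkN_toList {α V : Type} {Q : RGP α V} {u v : V} {m : ℕ} {L : Language α}
    (h : Q.WalkN u v m L) :
    ∃ l : List V, l.length = m ∧ cArcs Q u l ∧ l.getLastD u = v ∧ cLang Q u l = L := by
  induction h with
  | @single x y hxy =>
      exact ⟨[y], rfl, ⟨hxy, trivial⟩, rfl, mul_one _⟩
  | @cons x y z m L hxy _ ih =>
      obtain ⟨l, hlen, harcs, hlast, hlang⟩ := ih
      refine ⟨y :: l, by simp [hlen], ⟨hxy, harcs⟩, ?_, ?_⟩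
      · rw [List.getLastD_cons]; exact hlast
      · simp [cLang, hlang]

lemma walkN_ofList {α V : Type} (Q : RGP α V) :
    ∀ (l : List V) (u : V), l ≠ [] → cArcs Q u l →
      Q.WalkN u (l.getLastD u) l.length (cLang Q u l)
  | [], _, hne, _ => absurd rfl hne
  | [y], u, _, ⟨hxy, _⟩ => by
      simpa [cLang, List.getLastD_cons] using RGP.WalkN.single (Q := Q) hxy
  | y :: y' :: l, u, _, ⟨hxy, harcs⟩ => by
      have hw := walkN_ofList Q (y' :: l) y (by simp) harcs
      rw [List.getLastD_cons]; exact RGP.WalkN.cons hxy hw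

/-- If `A` is recognized by a DFA with `n` states and there is a directed walk from `u`
to `v` in the RGP `Q` whose language is contained in `A`, then there is such a walk of
length at most `2^n * |V(Q)|`. -/
theorem exists_short_walk
    {α V σd : Type} [Fintype V] [Fintype σd] (Q : RGP α V)
    (M : DFA α σd) (A : Language α) (hA : M.accepts = A) (u v : V)
    (h : ∃ m L, Q.WalkN u v m L ∧ L ≤ A) :
    ∃ m L, Q.WalkN u v m L ∧ L ≤ A ∧ m ≤ 2 ^ Fintype.card σd * Fintype.card V := by
  classical
  set N := 2 ^ Fintype.card σd * Fintype.card V with hN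
  obtain ⟨m, L, hw, hLA⟩ := h
  clear_value N
  -- strong induction on the length `m`
  induction m using Nat.strong_induction_on generalizing L with
  | _ m ih =>
  by_cases hm : m ≤ N
  · exact ⟨m, L, hw, hLA, hm⟩
  push_neg at hm
  -- convert to a list walk
  obtain ⟨l, hlen, harcs, hlast, hlang⟩ := walkN_toList hw
  -- the pair (vertex, set of DFA states) at position `i`
  set xpos : ℕ → V := fun i => (l.take i).getLastD u with hxpos
  set S : ℕ → Set σd := fun i => {q | ∃ w ∈ cLang Q u (l.take i), M.eval w = q} with hS
  have hcard : Fintype.card (V × Set σd) < Fintype.card (Fin m) := by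
    simp only [Fintype.card_prod, Fintype.card_set, Fintype.card_fin]
    calc Fintype.card V * 2 ^ Fintype.card σd
        = N := by rw [hN, mul_comm]
      _ < m := hm
  obtain ⟨a, b, hab, hfab⟩ :=
    Fintype.exists_ne_map_eq_of_card_lt (fun k : Fin m => (xpos (k.1 + 1), S (k.1 + 1))) hcard
  -- wlog a < b
  wlog hlt : (a : ℕ) < (b : ℕ) generalizing a b
  · exact this b a hab.symm hfab.symm
      (lt_of_le_of_ne (not_lt.mp hlt) (fun e => hab (Fin.ext e.symm)))
  set i := (a : ℕ) + 1 with hi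
  set j := (b : ℕ) + 1 with hj
  have hij : i < j := by omega
  have hjm : j ≤ m := by omega
  have hxeq : xpos i = xpos j := congrArg Prod.fst hfab
  have hSeq : S i = S j := congrArg Prod.snd hfab
  -- the shorter list
  set l' := l.take i ++ l.drop j with hl'
  -- facts about splitting l at j
  have hsplitj : l = l.take j ++ l.drop j := (List.take_append_drop j l).symm
  have harcsj : cArcs Q u (l.take j) ∧ cArcs Q (xpos j) (l.drop j) := by
    rw [hsplitj] at harcs
    exact (cArcs_append Q u _ _).mp harcs
  have hlangfull : L = cLang Q u (l.take j) * cLang Q (xpos j) (l.drop j) := by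
    rw [← hlang]; conv_lhs => rw [hsplitj]
    exact cLang_append Q u _ _
  have hlastfull : (l.drop j).getLastD (xpos j) = v := by
    rw [← hlast]; conv_rhs => rw [hsplitj]
    exact (getLastD_append' _ _ _).symm
  -- arcs for l'
  have htakei : (l.take j).take i = l.take i := by
    rw [List.take_take, min_eq_left (le_of_lt hij)]
  have hsplitij : l.take j = l.take i ++ ((l.take j).drop i) := by
    conv_lhs => rw [← List.take_append_drop i (l.take j)]
    rw [htakei]
  have harcsi : cArcs Q u (l.take i) := by
    have := harcsj.1
    rw [hsplitij, cArcs_append] at this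
    exact this.1
  have hx2 : (l.take i).getLastD u = xpos j := hxeq
  have harcs' : cArcs Q u l' := by
    rw [hl', cArcs_append, hx2]
    exact ⟨harcsi, harcsj.2⟩
  have hlang' : cLang Q u l' = cLang Q u (l.take i) * cLang Q (xpos j) (l.drop j) := by
    rw [hl', cLang_append, hx2]
  have hlast' : l'.getLastD u = v := by
    rw [hl', getLastD_append', hx2]
    exact hlastfull
  have hlen' : l'.length = i + (m - j) := by
    rw [hl', List.length_append, List.length_take, List.length_drop, hlen,
      min_eq_left (by omega : i ≤ m)]
  have hne' : l' ≠ [] := by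
    intro h0
    have h1 : l'.length = 0 := by rw [h0]; rfl
    rw [hlen'] at h1
    omega
  -- containment of the new language in A
  have hcont : cLang Q u l' ≤ A := by
    rw [hlang']
    intro w hwmem
    replace hwmem := Language.mem_mul.mp hwmem
    obtain ⟨p, hp, s, hs, rfl⟩ := hwmem
    have hpS : M.eval p ∈ S i := ⟨p, hp, rfl⟩
    rw [hSeq] at hpS
    obtain ⟨p', hp', hpeval⟩ := hpS
    have hps' : p' ++ s ∈ A := by
      apply hLA
      rw [hlangfull]; apply Language.mem_mul.mpr
      exact ⟨p', hp', s, hs, rfl⟩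
    rw [← hA] at hps' ⊢; rw [DFA.mem_accepts] at hps'; show M.eval (p ++ s) ∈ M.accept
    have e1 : M.eval (p' ++ s) = M.evalFrom (M.eval p') s := M.evalFrom_of_append _ _ _
    have e2 : M.eval (p ++ s) = M.evalFrom (M.eval p) s := M.evalFrom_of_append _ _ _
    rw [e2, ← hpeval, ← e1]
    exact hps'
  -- the new shorter walk
  have hw' : Q.WalkN u v l'.length (cLang Q u l') := by
    have := walkN_ofList Q l' u hne' harcs'
    rwa [hlast'] at this
  exact ih l'.length (by omega) _ hw' hcont
end

section
/- Let Q be an undirected connected n-core RGP over the unary alphabet {a} with all edge labels in {a, a⁺}. If no edge of Q is labeled 'a' (i.e., all edges are labeled 'a⁺'), then Q has at most one edge. -/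
/-- The language `{a}` over the unary alphabet (modeled by `Unit`). -/
def La : Language Unit := {w : List Unit | w = [()]}

/-- The language `a⁺` of all nonempty words over the unary alphabet. -/
def Lap : Language Unit := {w : List Unit | w ≠ []}

/-- An RGP is undirected if its arc relation and labeling are symmetric. -/
def Undirected {V : Type} (Q : RGP Unit V) : Prop :=
  ∀ x y, Q.arcs x y → Q.arcs y x ∧ Q.label y x = Q.label x y

/-- All arc labels are `a` or `a⁺`. -/
def LabelsAAp {V : Type} (Q : RGP Unit V) : Prop :=
  ∀ x y, Q.arcs x y → Q.label x y = La ∨ Q.label x y = Lap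

/-- The underlying undirected graph of `Q` is connected. -/
def Conn {V : Type} (Q : RGP Unit V) : Prop :=
  ∀ u v : V, Relation.ReflTransGen (fun a b => Q.arcs a b ∨ Q.arcs b a) u v

/-- `Ea Q x y`: `(x, y)` is an arc of `Q` labeled `a`; this is the arc relation
of the graph `Q^a` formed by the edges of `Q` labeled `a`. -/
def Ea {V : Type} (Q : RGP Unit V) (x y : V) : Prop :=
  Q.arcs x y ∧ Q.label x y = La

/-- Reachability in the underlying undirected graph of `Q^a` (used to describe the
connected components of `Q^a`). -/
def ReachA {V : Type} (Q : RGP Unit V) : V → V → Prop :=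
  Relation.ReflTransGen (fun a b => Ea Q a b ∨ Ea Q b a)

/-- If `Q` is an undirected connected n-core RGP over the unary alphabet with all edge
labels in `{a, a⁺}` and no edge labeled `a`, then `Q` has at most one edge. -/
theorem ncore_all_aplus_at_most_one_edge
    {V : Type} [Fintype V] (Q : RGP Unit V)
    (hU : Undirected Q) (hL : LabelsAAp Q) (hC : Conn Q) (hcore : IsNCore Q)
    (hnoA : ∀ x y, Q.arcs x y → Q.label x y = Lap) :
    ∀ x y x' y', Q.arcs x y → Q.arcs x' y' →
      (x = x' ∧ y = y') ∨ (x = y' ∧ y = x') := by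
  intro x y x' y' hxy hxy'
  -- sub-RGP consisting of the single edge {x, y}
  set C : SubRGP Q :=
    { verts := {x, y}
      arcs := fun a b => (a = x ∧ b = y) ∨ (a = y ∧ b = x)
      arcs_sub := by
        rintro a b (⟨rfl, rfl⟩ | ⟨rfl, rfl⟩)
        · exact hxy
        · exact (hU _ _ hxy).1
      mem_left := by rintro a b (⟨rfl, rfl⟩ | ⟨rfl, rfl⟩) <;> simp
      mem_right := by rintro a b (⟨rfl, rfl⟩ | ⟨rfl, rfl⟩) <;> simp } with hCdef
  have hLapLap : Lap * Lap ≤ Lap := by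
    intro w hw
    have hw : w ∈ (Lap * Lap : Language Unit) := hw
    rw [Language.mem_mul] at hw
    obtain ⟨a, ha, b, hb, rfl⟩ := hw
    simp only [Lap, Set.mem_setOf_eq] at ha hb ⊢
    intro h
    exact ha (List.append_eq_nil_iff.mp h).1
  have hx : x ∈ C.verts := by simp [hCdef]
  have hy : y ∈ C.verts := by simp [hCdef]
  have hhom : NHom Q C.toRGP := by
    refine ⟨fun _ => ⟨x, hx⟩, ?_⟩
    intro p q hpq
    refine ⟨Q.label x y * Q.label y x, ?_, ?_⟩
    · refine RGP.Walk.cons (y := (⟨y, hy⟩ : C.verts)) ?_ (RGP.Walk.single ?_)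
      · exact Or.inl ⟨rfl, rfl⟩
      · exact Or.inr ⟨rfl, rfl⟩
    · rw [hnoA p q hpq, hnoA x y hxy, hnoA y x (hU x y hxy).1]
      exact hLapLap
  have hnp : ¬ C.Proper := fun h => hcore C h hhom
  rw [SubRGP.Proper, not_or, not_ne_iff, not_ne_iff] at hnp
  have harcs := hnp.2
  rw [← harcs] at hxy'
  rcases hxy' with ⟨rfl, rfl⟩ | ⟨rfl, rfl⟩
  · exact Or.inl ⟨rfl, rfl⟩
  · exact Or.inr ⟨rfl, rfl⟩
end

section
/- Let Q be an undirected connected n-core RGP over the unary alphabet {a} with all edge labels in {a, a⁺}. If Q contains a loop at a vertex v (an edge joining v to itself, with either label), then v is the only vertex of Q. -/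

lemma La_nonempty_word {w : List Unit} (h : w ∈ La) : w ≠ [] := by
  simp only [La, Set.mem_setOf_eq] at h; rw [h]; simp

lemma Lap_nonempty_word {w : List Unit} (h : w ∈ Lap) : w ≠ [] := h

lemma label_nonempty_word {V : Type} (Q : RGP Unit V) (hL : LabelsAAp Q)
    {x y : V} (h : Q.arcs x y) {w : List Unit} (hw : w ∈ Q.label x y) : w ≠ [] := by
  rcases hL x y h with h' | h'
  · exact La_nonempty_word (h' ▸ hw)
  · exact Lap_nonempty_word (h' ▸ hw)

lemma aux_first_step {V : Type} (S : V → V → Prop) :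
    ∀ {x u : V}, Relation.ReflTransGen S x u → ∀ v : V, x = v → u ≠ v →
      ∃ w, w ≠ v ∧ S v w := by
  intro x u h
  induction h using Relation.ReflTransGen.head_induction_on with
  | refl => intro v hx hu; exact absurd hx hu
  | head hab hcb ih =>
    rename_i a c
    intro v hx hu
    by_cases hc : c = v
    · exact ih v hc hu
    · exact ⟨c, hc, hx ▸ hab⟩

/-- If `Q` is an undirected connected n-core RGP over the unary alphabet with all edge
labels in `{a, a⁺}` and `Q` has a loop at `v`, then `v` is the only vertex of `Q`. -/
theorem ncore_loop_single_vertex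
    {V : Type} [Fintype V] (Q : RGP Unit V)
    (hU : Undirected Q) (hL : LabelsAAp Q) (hC : Conn Q) (hcore : IsNCore Q)
    (v : V) (hloop : Q.arcs v v) :
    ∀ u : V, u = v := by
  intro u
  by_contra huv
  rcases hL v v hloop with hla | hlap
  · -- loop labeled a : collapse everything to v
    set C : SubRGP Q :=
      { verts := {v}
        arcs := fun x y => x = v ∧ y = v
        arcs_sub := fun x y h => h.1 ▸ h.2 ▸ hloop
        mem_left := fun x y h => h.1
        mem_right := fun x y h => h.2 } with hCdef
    apply hcore C
    · left
      intro h
      exact huv (by have : u ∈ C.verts := h ▸ Set.mem_univ u; exact this)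
    · refine ⟨fun _ => ⟨v, rfl⟩, ?_⟩
      intro x y hxy
      refine ⟨Q.label v v, RGP.Walk.single (show C.toRGP.arcs ⟨v, rfl⟩ ⟨v, rfl⟩ from ⟨rfl, rfl⟩), ?_⟩
      rw [hla]
      rcases hL x y hxy with h' | h'
      · rw [h']
      · rw [h']; intro w hw; exact La_nonempty_word hw
  · -- loop labeled a⁺ : remove the loop arc
    obtain ⟨w, hwv, hS⟩ :=
      aux_first_step (fun a b => Q.arcs a b ∨ Q.arcs b a) (hC v u) v rfl huv
    have hvw : Q.arcs v w := by
      rcases hS with h | h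
      · exact h
      · exact (hU w v h).1
    have hwv' : Q.arcs w v := (hU v w hvw).1
    set C : SubRGP Q :=
      { verts := Set.univ
        arcs := fun x y => Q.arcs x y ∧ ¬(x = v ∧ y = v)
        arcs_sub := fun x y h => h.1
        mem_left := fun _ _ _ => trivial
        mem_right := fun _ _ _ => trivial } with hCdef
    apply hcore C
    · right
      intro heq
      have h2 := hloop
      rw [← heq] at h2
      exact h2.2 ⟨rfl, rfl⟩
    · refine ⟨fun x => ⟨x, trivial⟩, ?_⟩
      intro x y hxy
      by_cases hxy' : x = v ∧ y = v
      · obtain ⟨hx, hy⟩ := hxy'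
        rw [hx, hy]
        refine ⟨Q.label v w * Q.label w v, ?_, ?_⟩
        · exact RGP.Walk.cons
            (show C.toRGP.arcs ⟨v, trivial⟩ ⟨w, trivial⟩ from ⟨hvw, fun h => hwv h.2⟩)
            (RGP.Walk.single
              (show C.toRGP.arcs ⟨w, trivial⟩ ⟨v, trivial⟩ from ⟨hwv', fun h => hwv h.1⟩))
        · rw [hlap]
          intro z hz
          rcases hz with ⟨p, hp, q, hq, hpq⟩
          have hpne : p ≠ [] := label_nonempty_word Q hL hvw hp
          show z ≠ []
          intro hznil
          rw [← hpq] at hznil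
          exact hpne (List.append_eq_nil_iff.mp hznil).1
      · exact ⟨Q.label x y, RGP.Walk.single (show C.toRGP.arcs ⟨x, trivial⟩ ⟨y, trivial⟩ from ⟨hxy, hxy'⟩), le_refl _⟩
end

section
/- Let Q be an undirected connected n-core RGP over the unary alphabet {a} with all edge labels in {a, a⁺}. If Q is loop-free, then every edge of Q labeled 'a⁺' is a bridge, i.e., removing it disconnects the underlying graph of Q. -/
/-- If `Q` is an undirected connected loop-free n-core RGP over the unary alphabet with
all edge labels in `{a, a⁺}`, then every edge labeled `a⁺` is a bridge: its endpoints
are disconnected in the underlying graph once the edge is removed. -/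
theorem ncore_aplus_edge_is_bridge
    {V : Type} [Fintype V] (Q : RGP Unit V)
    (hU : Undirected Q) (hL : LabelsAAp Q) (hC : Conn Q) (hcore : IsNCore Q)
    (hloopfree : ∀ v : V, ¬ Q.arcs v v) :
    ∀ x y, Q.arcs x y → Q.label x y = Lap →
      ¬ Relation.ReflTransGen
          (fun a b => (Q.arcs a b ∨ Q.arcs b a) ∧
            ¬ ((a = x ∧ b = y) ∨ (a = y ∧ b = x))) x y := by
  intro x y hxy hlab hreach
  have hxny : x ≠ y := fun h => hloopfree x (by rw [h] at hxy ⊢; exact hxy)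
  -- the arc relation of the sub-RGP obtained by deleting the edge {x, y}
  set R : V → V → Prop :=
    fun a b => Q.arcs a b ∧ ¬((a = x ∧ b = y) ∨ (a = y ∧ b = x)) with hRdef
  have hRsymm : ∀ a b, R a b → R b a := by
    rintro a b ⟨h1, h2⟩
    refine ⟨(hU a b h1).1, fun h => h2 ?_⟩
    rcases h with ⟨p, q⟩ | ⟨p, q⟩
    · exact Or.inr ⟨q, p⟩
    · exact Or.inl ⟨q, p⟩
  let C : SubRGP Q :=
    { verts := Set.univ
      arcs := R
      arcs_sub := fun a b h => h.1
      mem_left := fun _ _ _ => trivial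
      mem_right := fun _ _ _ => trivial }
  have hproper : C.Proper := by
    refine Or.inr fun h => ?_
    have hRxy : R x y := by
      show C.arcs x y
      rw [h]; exact hxy
    exact hRxy.2 (Or.inl ⟨rfl, rfl⟩)
  -- every label is contained in a⁺
  have hlabLap : ∀ a b, Q.arcs a b → Q.label a b ≤ Lap := by
    intro a b h
    rcases hL a b h with h' | h'
    · rw [h']
      intro w hw
      simp only [La, Set.mem_setOf_eq] at hw
      simp [Lap, hw]
    · rw [h']
  -- any walk in C.toRGP has language contained in a⁺
  have hwalkLap : ∀ (u v : C.verts) (L : Language Unit),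
      C.toRGP.Walk u v L → L ≤ Lap := by
    intro u v L hw
    induction hw with
    | @single p q h => exact hlabLap p.1 q.1 (C.arcs_sub _ _ h)
    | @cons p q r L' h _ _ =>
      intro w hw
      rcases hw with ⟨w1, hw1, w2, hw2, rfl⟩
      have : w1 ≠ [] := hlabLap p.1 q.1 (C.arcs_sub _ _ h) hw1
      simp [Lap]
      exact fun hw1e _ => this hw1e
  -- from reflexive-transitive reachability, get a walk (or equality)
  have hwalk : ∀ a b : V, Relation.ReflTransGen (fun a b => R a b ∨ R b a) a b →
      a = b ∨ ∃ L, C.toRGP.Walk ⟨a, trivial⟩ ⟨b, trivial⟩ L ∧ L ≤ Lap := by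
    intro a b h
    induction h using Relation.ReflTransGen.head_induction_on with
    | refl => exact Or.inl rfl
    | @head p q hpq _ ih =>
      have harc : C.arcs p q := hpq.elim id (hRsymm q p)
      have harc' : C.toRGP.arcs (⟨p, trivial⟩ : C.verts) (⟨q, trivial⟩ : C.verts) := harc
      have hw1 : C.toRGP.Walk (⟨p, trivial⟩ : C.verts) (⟨q, trivial⟩ : C.verts) (Q.label p q) :=
        RGP.Walk.single harc
      rcases ih with rfl | ⟨L, hw, hL'⟩
      · exact Or.inr ⟨_, hw1, hlabLap p q harc.1⟩
      · refine Or.inr ⟨_, RGP.Walk.cons harc' hw, ?_⟩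
        exact hwalkLap _ _ _ (RGP.Walk.cons harc' hw)
  -- the deleted-edge reachability implies R-reachability, in both directions
  have hstep : ∀ a b, ((Q.arcs a b ∨ Q.arcs b a) ∧
      ¬((a = x ∧ b = y) ∨ (a = y ∧ b = x))) → (R a b ∨ R b a) := by
    rintro a b ⟨h1 | h1, h2⟩
    · exact Or.inl ⟨h1, h2⟩
    · refine Or.inr ⟨h1, fun h => h2 ?_⟩
      rcases h with ⟨p, q⟩ | ⟨p, q⟩
      · exact Or.inr ⟨q, p⟩
      · exact Or.inl ⟨q, p⟩
  have hreachR : Relation.ReflTransGen (fun a b => R a b ∨ R b a) x y :=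
    Relation.ReflTransGen.mono hstep _ _ hreach
  have hreachR' : Relation.ReflTransGen (fun a b => R a b ∨ R b a) y x := by
    have hsym : Symmetric (fun a b => R a b ∨ R b a) :=
      fun a b h => h.elim (fun h' => Or.inr h') (fun h' => Or.inl h')
    exact (@Relation.ReflTransGen.stdSymm _ _ ⟨fun a b h => hsym h⟩).symm _ _ hreachR
  -- identity is an n-homomorphism to the proper sub-RGP: contradiction
  refine hcore C hproper ⟨fun v => ⟨v, trivial⟩, ?_⟩
  intro u v huv
  by_cases hsp : (u = x ∧ v = y) ∨ (u = y ∧ v = x)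
  · have hlabuv : Q.label u v = Lap := by
      rcases hsp with ⟨hp, hq⟩ | ⟨hp, hq⟩
      · rw [hp, hq]; exact hlab
      · rw [hp, hq, (hU x y hxy).2]; exact hlab
    have hr : Relation.ReflTransGen (fun a b => R a b ∨ R b a) u v := by
      rcases hsp with ⟨hp, hq⟩ | ⟨hp, hq⟩
      · rw [hp, hq]; exact hreachR
      · rw [hp, hq]; exact hreachR'
    have hne : u ≠ v := by
      rcases hsp with ⟨hp, hq⟩ | ⟨hp, hq⟩
      · rw [hp, hq]; exact hxny
      · rw [hp, hq]; exact hxny.symm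
    rcases hwalk u v hr with h | ⟨L, hw, hL'⟩
    · exact absurd h hne
    · exact ⟨L, hw, by rw [hlabuv]; exact hL'⟩
  · exact ⟨Q.label u v,
      RGP.Walk.single (x := (⟨u, trivial⟩ : C.verts)) (y := ⟨v, trivial⟩)
        (show C.arcs u v from ⟨huv, hsp⟩), le_rfl⟩
end

section
/- Let Q be an undirected connected n-core RGP over the unary alphabet {a} with all edge labels in {a, a⁺}. Let Q^a be the undirected graph formed by the edges of Q labeled 'a', let S_i be a connected component of Q^a, and let X_i be the set of vertices of S_i that are incident to an edge of Q labeled 'a⁺'. Then every graph endomorphism f of S_i satisfying f(x) = x for all x ∈ X_i is an automorphism of S_i. -/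
/-- Let `Q` be an undirected connected n-core RGP over the unary alphabet with all edge
labels in `{a, a⁺}`, let `S_i` be the connected component of a vertex `s` in `Q^a`, and
let `X_i` be the set of vertices of `S_i` incident to an edge labeled `a⁺`. Then every
graph endomorphism `f` of `S_i` fixing `X_i` pointwise is an automorphism of `S_i`:
it is bijective and its inverse also preserves edges. -/
theorem ncore_component_endo_fixing_is_auto
    {V : Type} [Fintype V] (Q : RGP Unit V)
    (hU : Undirected Q) (hL : LabelsAAp Q) (hC : Conn Q) (hcore : IsNCore Q)
    (s : V) (f : {v : V // ReachA Q s v} → {v : V // ReachA Q s v})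
    (hf : ∀ a b : {v : V // ReachA Q s v}, Ea Q a.1 b.1 → Ea Q (f a).1 (f b).1)
    (hfix : ∀ a : {v : V // ReachA Q s v},
      (∃ w, Q.arcs a.1 w ∧ Q.label a.1 w = Lap) → f a = a) :
    Function.Bijective f ∧
      ∀ a b : {v : V // ReachA Q s v}, Ea Q (f a).1 (f b).1 → Ea Q a.1 b.1 := by
  classical
  have hsurj : Function.Surjective f := by
    by_contra hns
    rw [Function.Surjective] at hns
    push_neg at hns
    obtain ⟨t, ht⟩ := hns
    set g : V → V := fun v => if h : ReachA Q s v then (f ⟨v, h⟩).1 else v with hg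
    have key : ∀ x y, Q.arcs x y →
        Q.arcs (g x) (g y) ∧ Q.label (g x) (g y) = Q.label x y := by
      intro x y hxy
      rcases hL x y hxy with hla | hlap
      · by_cases hx : ReachA Q s x
        · have hy : ReachA Q s y := hx.tail (Or.inl ⟨hxy, hla⟩)
          have he := hf ⟨x, hx⟩ ⟨y, hy⟩ ⟨hxy, hla⟩
          have hgx : g x = (f ⟨x, hx⟩).1 := dif_pos hx
          have hgy : g y = (f ⟨y, hy⟩).1 := dif_pos hy
          rw [hgx, hgy]
          exact ⟨he.1, by rw [he.2, hla]⟩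
        · have hy : ¬ ReachA Q s y := fun hy => hx (hy.tail (Or.inr ⟨hxy, hla⟩))
          rw [show g x = x from dif_neg hx, show g y = y from dif_neg hy]
          exact ⟨hxy, rfl⟩
      · have hgx : g x = x := by
          by_cases hx : ReachA Q s x
          · have hfx := hfix ⟨x, hx⟩ ⟨y, hxy, hlap⟩
            rw [show g x = (f ⟨x, hx⟩).1 from dif_pos hx, hfx]
          · exact dif_neg hx
        have hgy : g y = y := by
          obtain ⟨hyx, hlyx⟩ := hU x y hxy
          by_cases hy : ReachA Q s y
          · have hfy := hfix ⟨y, hy⟩ ⟨x, hyx, by rw [hlyx, hlap]⟩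
            rw [show g y = (f ⟨y, hy⟩).1 from dif_pos hy, hfy]
          · exact dif_neg hy
        rw [hgx, hgy]; exact ⟨hxy, rfl⟩
    let C : SubRGP Q := {
      verts := Set.range g
      arcs := fun x y => Q.arcs x y ∧ x ∈ Set.range g ∧ y ∈ Set.range g
      arcs_sub := fun x y h => h.1
      mem_left := fun x y h => h.2.1
      mem_right := fun x y h => h.2.2 }
    have hproper : C.Proper := by
      left
      intro heq
      have htr : t.1 ∈ C.verts := heq ▸ Set.mem_univ _
      obtain ⟨v, hv⟩ := htr
      by_cases hvr : ReachA Q s v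
      · have hgv : g v = (f ⟨v, hvr⟩).1 := dif_pos hvr
        exact ht ⟨v, hvr⟩ (Subtype.ext (by rw [← hv, hgv]))
      · have hgv : g v = v := dif_neg hvr
        exact hvr (by rw [← hgv, hv]; exact t.2)
    refine hcore C hproper ⟨fun v => ⟨g v, ⟨v, rfl⟩⟩, ?_⟩
    intro x y hxy
    obtain ⟨ha, hl⟩ := key x y hxy
    exact ⟨Q.label (g x) (g y), RGP.Walk.single ⟨ha, ⟨x, rfl⟩, ⟨y, rfl⟩⟩, le_of_eq hl⟩
  have hbij : Function.Bijective f := Finite.surjective_iff_bijective.mp hsurj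
  refine ⟨hbij, ?_⟩
  intro a b hab
  set S : Set ({v : V // ReachA Q s v} × {v : V // ReachA Q s v}) :=
    {p | Ea Q p.1.1 p.2.1} with hS
  have hfinS : S.Finite := Set.toFinite S
  have hmaps : Set.MapsTo (fun p => (f p.1, f p.2)) S S := fun p hp => hf p.1 p.2 hp
  have hinj : Set.InjOn (fun p => (f p.1, f p.2)) S := by
    intro p _ q _ h
    obtain ⟨h1, h2⟩ := Prod.ext_iff.mp h
    exact Prod.ext (hbij.1 h1) (hbij.1 h2)
  have hbijS := (hfinS.injOn_iff_bijOn_of_mapsTo hmaps).mp hinj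
  obtain ⟨p, hp, hpe⟩ := hbijS.2.2 (show (f a, f b) ∈ S from hab)
  obtain ⟨h1, h2⟩ := Prod.ext_iff.mp hpe
  have e1 : p.1 = a := hbij.1 h1
  have e2 : p.2 = b := hbij.1 h2
  rw [← e1, ← e2]
  exact hp
end

section
/- Let Q be an undirected connected n-core RGP over the unary alphabet {a} with all edge labels in {a, a⁺}, and suppose Q has at least two edges. Then the undirected graph Q^a formed by the edges of Q labeled 'a' is loopless, has at least one edge, and contains an odd cycle (i.e., Q^a is not bipartite). -/
lemma La_le_Lap : La ≤ Lap := by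
  intro x hx
  simp only [La, Set.mem_setOf_eq] at hx
  simp [Lap, hx]

lemma mul_le_Lap {L1 L2 : Language Unit} (h : L1 ≤ Lap) : L1 * L2 ≤ Lap := by
  rintro w hw
  change w ∈ (L1 * L2 : Language Unit) at hw
  rw [Language.mem_mul] at hw
  obtain ⟨a, ha, b, hb, rfl⟩ := hw
  have ha' : a ∈ Lap := h ha
  simp only [Lap, Set.mem_setOf_eq] at ha' ⊢
  intro hcon
  exact ha' (List.append_eq_nil_iff.mp hcon).1

lemma walk2 {α V : Type} {P : RGP α V} (C : SubRGP P) (p q : C.verts)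
    (h1 : C.arcs p.1 q.1) (h2 : C.arcs q.1 p.1) :
    C.toRGP.Walk p p (P.label p.1 q.1 * P.label q.1 p.1) :=
  RGP.Walk.cons h1 (RGP.Walk.single h2)

/-- If `Q` is an undirected connected n-core RGP over the unary alphabet with all edge
labels in `{a, a⁺}` and at least two edges, then the graph `Q^a` formed by the
`a`-labeled edges is loopless, has at least one edge, and is not bipartite (contains an
odd cycle), i.e., it admits no proper 2-coloring. -/
theorem ncore_two_edges_Qa_odd_cycle
    {V : Type} [Fintype V] (Q : RGP Unit V)
    (hU : Undirected Q) (hL : LabelsAAp Q) (hC : Conn Q) (hcore : IsNCore Q)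
    (htwo : ∃ x y x' y', Q.arcs x y ∧ Q.arcs x' y' ∧
      ¬ ((x = x' ∧ y = y') ∨ (x = y' ∧ y = x'))) :
    (∀ v : V, ¬ Ea Q v v) ∧ (∃ x y, Ea Q x y) ∧
      ¬ ∃ c : V → Bool, ∀ x y, Ea Q x y → c x ≠ c y := by
  obtain ⟨x0, y0, x1, y1, hxy0, hxy1, hdist⟩ := htwo
  have bool3 : ∀ a b d : Bool, a ≠ b → a ≠ d → b = d := by decide
  -- Part 1: loopless
  have part1 : ∀ v : V, ¬ Ea Q v v := by
    intro v hv
    refine hcore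
      { verts := {v}
        arcs := fun p q => p = v ∧ q = v
        arcs_sub := by rintro p q ⟨rfl, rfl⟩; exact hv.1
        mem_left := by rintro p q ⟨rfl, -⟩; rfl
        mem_right := by rintro p q ⟨-, rfl⟩; rfl } ?_ ?_
    · right
      intro heq
      have h0 : x0 = v ∧ y0 = v := by rw [← heq] at hxy0; exact hxy0
      have h1 : x1 = v ∧ y1 = v := by rw [← heq] at hxy1; exact hxy1
      obtain ⟨rfl, rfl⟩ := h0
      obtain ⟨e1, e2⟩ := h1
      exact hdist (Or.inl ⟨e1.symm, e2.symm⟩)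
    · refine ⟨fun _ => ⟨v, rfl⟩, fun x y hxy => ?_⟩
      refine ⟨Q.label v v, RGP.Walk.single ⟨rfl, rfl⟩, ?_⟩
      rw [hv.2]
      rcases hL x y hxy with h | h
      · rw [h]
      · rw [h]; exact La_le_Lap
  -- Part 2: has an a-edge
  have part2 : ∃ a b, Ea Q a b := by
    by_contra hno
    push_neg at hno
    have hlap : ∀ p q, Q.arcs p q → Q.label p q = Lap := by
      intro p q hpq
      rcases hL p q hpq with h | h
      · exact absurd ⟨hpq, h⟩ (hno p q)
      · exact h
    have hwx : Q.arcs y0 x0 := (hU x0 y0 hxy0).1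
    refine hcore
      { verts := {x0, y0}
        arcs := fun p q => (p = x0 ∧ q = y0) ∨ (p = y0 ∧ q = x0)
        arcs_sub := by rintro p q (⟨rfl, rfl⟩ | ⟨rfl, rfl⟩); exacts [hxy0, hwx]
        mem_left := by rintro p q (⟨rfl, -⟩ | ⟨rfl, -⟩) <;> simp
        mem_right := by rintro p q (⟨-, rfl⟩ | ⟨-, rfl⟩) <;> simp } ?_ ?_
    · right
      intro heq
      have h1 : (x1 = x0 ∧ y1 = y0) ∨ (x1 = y0 ∧ y1 = x0) := by
        rw [← heq] at hxy1; exact hxy1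
      rcases h1 with ⟨e1, e2⟩ | ⟨e1, e2⟩
      · exact hdist (Or.inl ⟨e1.symm, e2.symm⟩)
      · exact hdist (Or.inr ⟨e2.symm, e1.symm⟩)
    · refine ⟨fun _ => ⟨x0, by simp⟩, fun x y hxy => ?_⟩
      refine ⟨Q.label x0 y0 * Q.label y0 x0, ?_, ?_⟩
      · exact walk2 _ ⟨x0, by simp⟩ ⟨y0, by simp⟩ (Or.inl ⟨rfl, rfl⟩)
          (Or.inr ⟨rfl, rfl⟩)
      rw [hlap x y hxy]
      exact mul_le_Lap (by rw [hlap x0 y0 hxy0])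
  refine ⟨part1, part2, ?_⟩
  -- Part 3: not 2-colorable
  rintro ⟨c, hc⟩
  obtain ⟨u, w, huw⟩ := part2
  have hwu : Q.arcs w u := (hU u w huw.1).1
  have hlwu : Q.label w u = La := by rw [(hU u w huw.1).2, huw.2]
  refine hcore
    { verts := {u, w}
      arcs := fun p q => (p = u ∧ q = w) ∨ (p = w ∧ q = u)
      arcs_sub := by rintro p q (⟨rfl, rfl⟩ | ⟨rfl, rfl⟩); exacts [huw.1, hwu]
      mem_left := by rintro p q (⟨rfl, -⟩ | ⟨rfl, -⟩) <;> simp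
      mem_right := by rintro p q (⟨-, rfl⟩ | ⟨-, rfl⟩) <;> simp } ?_ ?_
  · right
    intro heq
    have h0 : (x0 = u ∧ y0 = w) ∨ (x0 = w ∧ y0 = u) := by
      rw [← heq] at hxy0; exact hxy0
    have h1 : (x1 = u ∧ y1 = w) ∨ (x1 = w ∧ y1 = u) := by
      rw [← heq] at hxy1; exact hxy1
    rcases h0 with ⟨e1, e2⟩ | ⟨e1, e2⟩ <;> rcases h1 with ⟨e3, e4⟩ | ⟨e3, e4⟩ <;>
      subst_vars <;> exact hdist (by tauto)
  · classical
    refine ⟨fun v => if c v = c u then ⟨u, by simp⟩ else ⟨w, by simp⟩,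
      fun x y hxy => ?_⟩
    rcases hL x y hxy with hla | hlp
    · -- a-labeled arc: colors differ
      have hne : c x ≠ c y := hc x y ⟨hxy, hla⟩
      by_cases hx : c x = c u
      · have hy : ¬ (c y = c u) := fun h => hne (hx.trans h.symm)
        simp only [if_pos hx, if_neg hy]
        exact ⟨Q.label u w, RGP.Walk.single (Or.inl ⟨rfl, rfl⟩),
          by rw [huw.2, hla]⟩
      · have hy : c y = c u := bool3 (c x) (c y) (c u) hne hx
        simp only [if_neg hx, if_pos hy]
        exact ⟨Q.label w u, RGP.Walk.single (Or.inr ⟨rfl, rfl⟩),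
          by rw [hlwu, hla]⟩
    · -- a⁺-labeled arc: any walk works
      by_cases hx : c x = c u <;> by_cases hy : c y = c u <;>
        simp only [if_pos, if_neg, hx, hy, if_true, if_false]
      · refine ⟨Q.label u w * Q.label w u, ?_,
          by rw [hlp]; exact mul_le_Lap (by rw [huw.2]; exact La_le_Lap)⟩
        exact walk2 _ ⟨u, by simp⟩ ⟨w, by simp⟩ (Or.inl ⟨rfl, rfl⟩)
          (Or.inr ⟨rfl, rfl⟩)
      · exact ⟨Q.label u w, RGP.Walk.single (Or.inl ⟨rfl, rfl⟩),
          by rw [huw.2, hlp]; exact La_le_Lap⟩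
      · exact ⟨Q.label w u, RGP.Walk.single (Or.inr ⟨rfl, rfl⟩),
          by rw [hlwu, hlp]; exact La_le_Lap⟩
      · refine ⟨Q.label w u * Q.label u w, ?_,
          by rw [hlp]; exact mul_le_Lap (by rw [hlwu]; exact La_le_Lap)⟩
        exact walk2 _ ⟨w, by simp⟩ ⟨u, by simp⟩ (Or.inr ⟨rfl, rfl⟩)
          (Or.inl ⟨rfl, rfl⟩)
end

section
/- Let Q be an undirected RGP over the unary alphabet {a} with all edge labels in {a, a⁺}, and let Q^a be the undirected graph on the vertices of Q whose edges are the edges of Q labeled 'a'. For any undirected graph G, let P(G) be the undirected RGP with the same vertex set and edge set as G in which every edge is labeled 'a'. Then G admits a graph homomorphism to Q^a if and only if P(G) →n Q. -/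

lemma walk_nonempty_word {V : Type} {Q : RGP Unit V} (hL : LabelsAAp Q)
    {u v : V} {L : Language Unit} (h : Q.Walk u v L) : ∃ w ∈ L, w ≠ [] := by
  induction h with
  | @single x y hxy =>
    refine ⟨[()], ?_, by simp⟩
    rcases hL _ _ hxy with h | h <;> rw [h]
    · exact rfl
    · exact List.cons_ne_nil () []
  | @cons x y z L hxy hw ih =>
    obtain ⟨w, hwL, hwne⟩ := ih
    refine ⟨[()] ++ w, ?_, by simp⟩
    refine Language.mem_mul.mpr ⟨[()], ?_, w, hwL, rfl⟩
    rcases hL _ _ hxy with h | h <;> rw [h]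
    · exact rfl
    · exact List.cons_ne_nil () []

/-- Let `Q` be an undirected RGP over the unary alphabet with all edge labels in
`{a, a⁺}`, and let `Q^a` (arc relation `Ea Q`) be the graph formed by the `a`-labeled
edges of `Q`. For an undirected graph `G` (a symmetric relation `E` on `W`), let
`P(G)` be the RGP on `W` with arcs `E` and every edge labeled `a`. Then `G` has a
graph homomorphism to `Q^a` iff `P(G) →n Q`. -/
theorem hom_Qa_iff_nhom
    {V W : Type} [Fintype V] [Fintype W]
    (Q : RGP Unit V) (hU : Undirected Q) (hL : LabelsAAp Q)
    (E : W → W → Prop) (hE : ∀ x y, E x y → E y x) :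
    (∃ f : W → V, ∀ x y, E x y → Ea Q (f x) (f y)) ↔
      NHom (⟨E, fun _ _ => La⟩ : RGP Unit W) Q := by
  constructor
  · rintro ⟨f, hf⟩
    refine ⟨f, fun x y hxy => ?_⟩
    obtain ⟨hq, hlab⟩ := hf x y hxy
    exact ⟨La, hlab ▸ RGP.Walk.single hq, le_refl _⟩
  · rintro ⟨f, hf⟩
    refine ⟨f, fun x y hxy => ?_⟩
    obtain ⟨L, hw, hle⟩ := hf x y hxy
    cases hw with
    | single hq =>
      refine ⟨hq, ?_⟩
      rcases hL _ _ hq with h | h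
      · exact h
      · exfalso
        have : ([(),()] : List Unit) ∈ La := hle (by rw [h]; exact List.cons_ne_nil () [()])
        have h2 : ([(),()] : List Unit) = [()] := this
        simp at h2
    | @cons _ y' _ L' hq hw' =>
      exfalso
      obtain ⟨w, hwL, hwne⟩ := walk_nonempty_word hL hw'
      have hmem : [()] ++ w ∈ Q.label (f x) y' * L' := by
        refine Language.mem_mul.mpr ⟨[()], ?_, w, hwL, rfl⟩
        rcases hL _ _ hq with h | h <;> rw [h]
        · exact rfl
        · exact List.cons_ne_nil () []
      have h2 : ([()] ++ w : List Unit) = [()] := hle hmem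
      simp at h2
      exact hwne h2
end

section
/- Let n ≥ 1 and let Q be the RGP over the unary alphabet {a} whose underlying digraph is the directed path q_0 → q_1 → ⋯ → q_{n−1}, with every arc labeled 'a'. For any RGP P over {a} with all arc labels in {a, a⁺}: P →n Q if and only if there exists a function g from the vertices of P to {0, 1, …, n−1} such that g(y) = g(x) + 1 for every arc (x,y) of P labeled 'a', and g(x) < g(y) for every arc (x,y) of P labeled 'a⁺'. -/
/-- The RGP whose underlying digraph is the directed path `q_0 → q_1 → ⋯ → q_{n-1}`,
with every arc labeled `a`. -/
def pathA (n : ℕ) : RGP Unit (Fin n) where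
  arcs i j := (i : ℕ) + 1 = (j : ℕ)
  label _ _ := La

lemma walk_pathA {n : ℕ} {i j : Fin n} {L : Language Unit}
    (h : (pathA n).Walk i j L) :
    ∃ m, 1 ≤ m ∧ (j : ℕ) = (i : ℕ) + m ∧ L = {w | w = List.replicate m ()} := by
  induction h with
  | @single x y hxy =>
    refine ⟨1, le_refl 1, hxy.symm, ?_⟩
    show La = _
    ext w
    simp [La]
  | @cons x y z L hxy hw ih =>
    obtain ⟨m, hm1, hm2, hm3⟩ := ih
    have hxy' : (x : ℕ) + 1 = (y : ℕ) := hxy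
    refine ⟨m + 1, by omega, by omega, ?_⟩
    subst hm3
    show La * _ = _
    ext w
    constructor
    · rintro ⟨a, ha, b, hb, rfl⟩
      have ha' : a = [()] := ha
      have hb' : b = List.replicate m () := hb
      subst ha'; subst hb'
      show _ = _
      simp [List.replicate_succ]
    · rintro rfl
      exact ⟨[()], rfl, List.replicate m (), rfl, by simp [List.replicate_succ]⟩

lemma walk_exists_pathA {n : ℕ} : ∀ (k : ℕ) (i j : Fin n), (j : ℕ) = (i : ℕ) + k + 1 →
    ∃ L, (pathA n).Walk i j L ∧ L ≤ Lap := by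
  intro k
  induction k with
  | zero =>
    intro i j hj
    refine ⟨La, RGP.Walk.single (show (i : ℕ) + 1 = (j : ℕ) by omega), ?_⟩
    intro w hw
    simp only [La, Set.mem_setOf_eq] at hw
    subst hw
    simp [Lap]
  | succ k ih =>
    intro i j hj
    have hjn : (j : ℕ) < n := j.isLt
    have hi1 : (i : ℕ) + 1 < n := by omega
    obtain ⟨L, hw, hLw⟩ := ih ⟨(i : ℕ) + 1, hi1⟩ j (by simp; omega)
    refine ⟨La * L, RGP.Walk.cons (show (i : ℕ) + 1 = _ from rfl) hw, ?_⟩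
    rintro w ⟨a, ha, b, hb, rfl⟩
    simp only [La, Set.mem_setOf_eq] at ha
    subst ha
    simp [Lap]

/-- For `n ≥ 1` and any RGP `P` over the unary alphabet with all arc labels in
`{a, a⁺}`: `P →n pathA n` iff there is a map `g` of the vertices of `P` to
`{0, …, n-1}` with `g y = g x + 1` for every `a`-labeled arc `(x,y)` and `g x < g y`
for every `a⁺`-labeled arc `(x,y)`. -/
theorem nhom_pathA_iff
    {V : Type} [Fintype V] (n : ℕ) (hn : 1 ≤ n)
    (P : RGP Unit V) (hL : LabelsAAp P) :
    NHom P (pathA n) ↔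
      ∃ g : V → Fin n, ∀ x y, P.arcs x y →
        (P.label x y = La → (g y : ℕ) = (g x : ℕ) + 1) ∧
        (P.label x y = Lap → (g x : ℕ) < (g y : ℕ)) := by
  constructor
  · rintro ⟨f, hf⟩
    refine ⟨f, fun x y hxy => ?_⟩
    obtain ⟨L, hw, hle⟩ := hf x y hxy
    obtain ⟨m, hm1, hm2, hm3⟩ := walk_pathA hw
    constructor
    · intro hla
      have : List.replicate m () ∈ L := by rw [hm3]; rfl
      have h2 : List.replicate m () ∈ La := by rw [← hla]; exact hle this
      simp only [La, Set.mem_setOf_eq] at h2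
      have : m = 1 := by
        have := congrArg List.length h2
        simpa using this
      omega
    · intro _
      omega
  · rintro ⟨g, hg⟩
    refine ⟨g, fun x y hxy => ?_⟩
    rcases hL x y hxy with hla | hlap
    · have h1 := (hg x y hxy).1 hla
      refine ⟨La, RGP.Walk.single (show ((g x : Fin n) : ℕ) + 1 = ((g y : Fin n) : ℕ) by omega), ?_⟩
      rw [hla]
    · have h1 := (hg x y hxy).2 hlap
      obtain ⟨L, hw, hLw⟩ := walk_exists_pathA ((g y : ℕ) - (g x : ℕ) - 1) (g x) (g y) (by omega)
      refine ⟨L, hw, ?_⟩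
      rw [hlap]
      exact hLw
end

section
/- Let n ≥ 1, let k ≥ 1 be an integer, and let S ⊆ {0, 1, …, n−1}. On the set {0, 1, …, n−1} define the binary relations: R_=(i,j) holds iff i ∈ S and j = i + k; R_≤k(i,j) holds iff i < j ≤ i + k; and R_*(i,j) holds iff i ≤ j. Let med(x,y,z) denote the median of three elements with respect to the usual order. Then med is a polymorphism of each of R_=, R_≤k, and R_*: whenever the relation holds for each of the pairs (i_1,j_1), (i_2,j_2), (i_3,j_3), it holds for the pair (med(i_1,i_2,i_3), med(j_1,j_2,j_3)). -/
/-- The median of three elements of a linear order: the middle one. -/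
def med {n : ℕ} (x y z : Fin n) : Fin n :=
  max (max (min x y) (min y z)) (min x z)

lemma med_val {n : ℕ} (x y z : Fin n) :
    (med x y z : ℕ) = max (max (min x.val y.val) (min y.val z.val)) (min x.val z.val) := rfl

lemma med_mem {n : ℕ} (x y z : Fin n) : med x y z = x ∨ med x y z = y ∨ med x y z = z := by
  unfold med
  rcases le_total x y with h1 | h1 <;> rcases le_total y z with h2 | h2 <;>
    rcases le_total x z with h3 | h3 <;>
    simp [min_eq_left, min_eq_right, max_eq_left, max_eq_right, *, le_antisymm_iff] <;>
    omega

/-- On `{0, …, n-1}` with `S ⊆ {0, …, n-1}` and `k ≥ 1`, let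
`R₌(i,j) ↔ i ∈ S ∧ j = i + k`, `R≤k(i,j) ↔ i < j ≤ i + k`, and `R⋆(i,j) ↔ i ≤ j`.
Then the median is a polymorphism of each of `R₌`, `R≤k` and `R⋆`. -/
theorem med_polymorphism_ak
    (n k : ℕ) (hn : 1 ≤ n) (hk : 1 ≤ k) (S : Set (Fin n)) :
    (∀ i₁ i₂ i₃ j₁ j₂ j₃ : Fin n,
        (i₁ ∈ S ∧ (j₁ : ℕ) = (i₁ : ℕ) + k) →
        (i₂ ∈ S ∧ (j₂ : ℕ) = (i₂ : ℕ) + k) →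
        (i₃ ∈ S ∧ (j₃ : ℕ) = (i₃ : ℕ) + k) →
        (med i₁ i₂ i₃ ∈ S ∧ (med j₁ j₂ j₃ : ℕ) = (med i₁ i₂ i₃ : ℕ) + k)) ∧
      (∀ i₁ i₂ i₃ j₁ j₂ j₃ : Fin n,
        (i₁ < j₁ ∧ (j₁ : ℕ) ≤ (i₁ : ℕ) + k) →
        (i₂ < j₂ ∧ (j₂ : ℕ) ≤ (i₂ : ℕ) + k) →
        (i₃ < j₃ ∧ (j₃ : ℕ) ≤ (i₃ : ℕ) + k) →
        (med i₁ i₂ i₃ < med j₁ j₂ j₃ ∧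
          (med j₁ j₂ j₃ : ℕ) ≤ (med i₁ i₂ i₃ : ℕ) + k)) ∧
      (∀ i₁ i₂ i₃ j₁ j₂ j₃ : Fin n,
        i₁ ≤ j₁ → i₂ ≤ j₂ → i₃ ≤ j₃ → med i₁ i₂ i₃ ≤ med j₁ j₂ j₃) := by
  refine ⟨?_, ?_, ?_⟩
  · rintro i₁ i₂ i₃ j₁ j₂ j₃ ⟨h1, e1⟩ ⟨h2, e2⟩ ⟨h3, e3⟩
    constructor
    · rcases med_mem i₁ i₂ i₃ with h | h | h <;> rw [h] <;> assumption
    · rw [med_val, med_val]; omega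
  · rintro i₁ i₂ i₃ j₁ j₂ j₃ ⟨h1, e1⟩ ⟨h2, e2⟩ ⟨h3, e3⟩
    rw [Fin.lt_iff_val_lt_val] at *
    rw [med_val, med_val]
    omega
  · intro i₁ i₂ i₃ j₁ j₂ j₃ h1 h2 h3
    rw [Fin.le_iff_val_le_val] at *
    rw [med_val, med_val]
    omega
end
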